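/- There do not exist formal power series λ(x,t), g(x,t) ∈ C[[x,t]] with λ(x,0) = x^4 and g(x,0) ≡ 0, and a positive integer m, such that (λ(x,t))^2 − t^{2m} x = (x + g(x,t))^8. -/

import Mathlib

/-!
Write `B = x + g` and expand in `t` over `ℂ[[x]]`: the equation becomes
`(λ - B⁴)(λ + B⁴) = t^{2m} x`. At `t = 0` the factor `λ + B⁴` is `2x⁴ ≠ 0`, so it is prime to
`t`, which is prime in `ℂ[[x]][[t]]`; hence `t^{2m} ∣ λ - B⁴`. Cancelling `t^{2m}` and setting
`t = 0` exhibits `x` as a multiple of `2x⁴` in `ℂ[[x]]`, which is absurd.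
-/

open MvPowerSeries

namespace PowerSeries

theorem constantCoeff_dvd_of_mul_eq_X_pow_mul_C {A : Type*} [CommRing A] [IsDomain A]
    {D S : PowerSeries A} {k : ℕ} {c : A} (h : D * S = X ^ k * C c)
    (hS : constantCoeff S ≠ 0) : constantCoeff S ∣ c := by
  obtain ⟨D', rfl⟩ : X ^ k ∣ D :=
    X_prime.pow_dvd_of_dvd_mul_right k (mt X_dvd_iff.mp hS) ⟨C c, h⟩
  have hD' : D' * S = C c :=
    mul_left_cancel₀ (pow_ne_zero k X_ne_zero) (by rw [← h, mul_assoc])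
  exact ⟨constantCoeff D', by rw [← constantCoeff_C c, ← hD', map_mul, mul_comm]⟩

end PowerSeries

namespace MvPowerSeries

theorem not_X_pow_dvd_X {σ R : Type*} [Semiring R] [Nontrivial R] (s : σ) {k : ℕ} (hk : 2 ≤ k) :
    ¬ (X s : MvPowerSeries σ R) ^ k ∣ X s := by
  classical
  rw [X_pow_dvd_iff]
  push Not
  exact ⟨Finsupp.single s 1, by simp; omega, by simp [coeff_X]⟩

variable (R : Type*) [CommSemiring R]

/-- `R[[x, t]] ≃ R[[x]][[t]]`, with `x = X 0` and `t = X 1`. -/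
noncomputable def finTwoEquivLast :
    MvPowerSeries (Fin 2) R ≃ₐ[R] PowerSeries (MvPowerSeries (Fin 1) R) :=
  (renameEquiv R (Equiv.swap 0 1)).trans (finSuccEquiv R 1)

variable {R}

theorem finTwoEquivLast_apply (f : MvPowerSeries (Fin 2) R) :
    finTwoEquivLast R f = finSuccEquiv R 1 (rename (Equiv.swap 0 1) f) :=
  rfl

@[simp]
theorem finTwoEquivLast_X_one : finTwoEquivLast R (X 1) = PowerSeries.X := by
  rw [finTwoEquivLast_apply, rename_X, Equiv.swap_apply_right, finSuccEquiv_X_zero]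

@[simp]
theorem finTwoEquivLast_X_zero : finTwoEquivLast R (X 0) = PowerSeries.C (X 0) := by
  rw [finTwoEquivLast_apply, rename_X, Equiv.swap_apply_left]
  exact finSuccEquiv_X_succ 0

theorem constantCoeff_finTwoEquivLast_eq {f : MvPowerSeries (Fin 2) R}
    {a : MvPowerSeries (Fin 1) R}
    (h : ∀ n, coeff (Finsupp.single 0 n) f = coeff (Finsupp.single 0 n) a) :
    PowerSeries.constantCoeff (finTwoEquivLast R f) = a := by
  ext x
  obtain ⟨n, rfl⟩ : ∃ n, x = Finsupp.single 0 n := ⟨x 0, Finsupp.unique_single x⟩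
  have hswap : Finsupp.cons 0 (Finsupp.single 0 n) =
      Finsupp.embDomain (Equiv.swap (0 : Fin 2) 1).toEmbedding (Finsupp.single 0 n) := by
    ext i; fin_cases i <;> simp [Finsupp.cons]
  rw [← PowerSeries.coeff_zero_eq_constantCoeff_apply, finTwoEquivLast_apply,
    coeff_coeff_finSuccEquiv, hswap, ← h]
  exact coeff_embDomain_rename _ f _

end MvPowerSeries

open MvPowerSeries in
/-- There are no formal power series `l(x,t), g(x,t) ∈ ℂ[[x,t]]` with `l(x,0) = x⁴`,
`g(x,0) ≡ 0`, and a positive integer `m`, such that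
`l(x,t)² - t^{2m}·x = (x + g(x,t))⁸`.  Here `ℂ[[x,t]]` is modelled by
`MvPowerSeries (Fin 2) ℂ` with `x = X 0` and `t = X 1`; setting `t = 0` corresponds to
the coefficients of the monomials `x^n`. -/
theorem stmt_2 :
    ¬ ∃ (l g : MvPowerSeries (Fin 2) ℂ) (m : ℕ), 0 < m ∧
      (∀ n : ℕ, coeff (Finsupp.single 0 n) l = if n = 4 then 1 else 0) ∧
      (∀ n : ℕ, coeff (Finsupp.single 0 n) g = 0) ∧
      l ^ 2 - (X 1) ^ (2 * m) * X 0 = (X 0 + g) ^ 8 := by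
  rintro ⟨l, g, m, -, hl, hg, heq⟩
  set x : MvPowerSeries (Fin 1) ℂ := X 0
  set L := finTwoEquivLast ℂ l
  set B := PowerSeries.C x + finTwoEquivLast ℂ g
  have hL : PowerSeries.constantCoeff L = x ^ 4 :=
    constantCoeff_finTwoEquivLast_eq fun n => by simp [hl, x, coeff_X_pow]
  have hg0 : PowerSeries.constantCoeff (finTwoEquivLast ℂ g) = 0 :=
    constantCoeff_finTwoEquivLast_eq fun n => by rw [hg, map_zero]
  have hB : PowerSeries.constantCoeff B = x := by
    rw [map_add, PowerSeries.constantCoeff_C, hg0, add_zero]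
  have hfactor : (L - B ^ 4) * (L + B ^ 4) = PowerSeries.X ^ (2 * m) * PowerSeries.C x := by
    have := congrArg (finTwoEquivLast ℂ) heq
    simp only [map_sub, map_mul, map_pow, map_add, finTwoEquivLast_X_zero,
      finTwoEquivLast_X_one] at this
    linear_combination this
  have hS : PowerSeries.constantCoeff (L + B ^ 4) = 2 * x ^ 4 := by
    rw [map_add, map_pow, hL, hB, two_mul]
  have hS_ne : (2 * x ^ 4 : MvPowerSeries (Fin 1) ℂ) ≠ 0 :=
    fun h => by simpa [x, two_mul, coeff_X_pow] using congrArg (coeff (Finsupp.single 0 4)) h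
  have : IsDomain (MvPowerSeries (Fin 1) ℂ) := NoZeroDivisors.to_isDomain _
  have hdvd := PowerSeries.constantCoeff_dvd_of_mul_eq_X_pow_mul_C hfactor (hS ▸ hS_ne)
  rw [hS] at hdvd
  exact not_X_pow_dvd_X 0 (by norm_num) (dvd_trans (dvd_mul_left _ _) hdvd)
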